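/- Let l₀,…,l₄ be ℂ-linearly independent linear forms in R. Let M be the 6×6 skew-symmetric matrix over R with rows (0, 0, 0, 0, l₀, l₁), (0, 0, 0, −l₀, 0, l₂), (0, 0, 0, −l₁, −l₂, 0), (0, l₀, l₁, 0, l₃, l₄), (−l₀, 0, l₂, −l₃, 0, 0), (−l₁, −l₂, 0, −l₄, 0, 0), and let S be the 6×2 matrix over R with first column (l₂, −l₁, l₀, 0, 0, 0) and second column (0, −l₄, l₃, l₂, −l₁, l₀). Then: (i) the kernel of the R-module homomorphism R⁶ → R², v ↦ Sᵀv, equals the image of the R-module homomorphism R⁶ → R⁶, v ↦ Mv; (ii) the ideal of R generated by the fifteen 2×2 minors of S equals the sub-Pfaffian ideal I₄(M). -/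

import Mathlib

open MvPolynomial Matrix

noncomputable section

/-- The polynomial ring `R = ℂ[x₀,…,x₄]`. -/
abbrev Rp : Type := MvPolynomial (Fin 5) ℂ

/-- The sub-Pfaffian `q_{αβ}(N)` of a `6 × 6` matrix: for `α < β` it is
`N_{ij}N_{kl} − N_{ik}N_{jl} + N_{il}N_{jk}` where `i < j < k < l` are the elements of
`{0,…,5} ∖ {α,β}`. -/
def subPf {A : Type*} [CommRing A] (N : Matrix (Fin 6) (Fin 6) A) (α β : Fin 6) : A :=
  match (List.finRange 6).filter (fun i => decide (i ≠ α) && decide (i ≠ β)) with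
  | [i, j, k, m] => N i j * N k m - N i k * N j m + N i m * N j k
  | _ => 0

/-- The Pfaffian of a `6 × 6` skew-symmetric matrix. -/
def pf {A : Type*} [CommRing A] (N : Matrix (Fin 6) (Fin 6) A) : A :=
  N 0 1 * subPf N 0 1 - N 0 2 * subPf N 0 2 + N 0 3 * subPf N 0 3
    - N 0 4 * subPf N 0 4 + N 0 5 * subPf N 0 5

/-- The sub-Pfaffian ideal `I₄(N)`, generated by the fifteen sub-Pfaffians. -/
def pfIdeal4 {A : Type*} [CommRing A] (N : Matrix (Fin 6) (Fin 6) A) : Ideal A :=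
  Ideal.span {x | ∃ α β : Fin 6, α < β ∧ x = subPf N α β}

def ev2 : Rp →ₐ[ℂ] Rp := aeval (fun i => if i = 2 then 0 else X i)

lemma ev2_X (i : Fin 5) : ev2 (X i) = if i = 2 then 0 else X i := by
  simp [ev2]

lemma X2_dvd_sub_ev2 (p : Rp) : (X 2 : Rp) ∣ p - ev2 p := by
  induction p using MvPolynomial.induction_on with
  | C r => simp [ev2]
  | add p q hp hq =>
      have h : p + q - ev2 (p + q) = (p - ev2 p) + (q - ev2 q) := by
        rw [_root_.map_add]; ring
      rw [h]; exact dvd_add hp hq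
  | mul_X p i hp =>
      rw [_root_.map_mul, ev2_X]
      by_cases h : i = 2
      · subst h; rw [if_pos rfl, mul_zero, sub_zero]
        exact Dvd.intro_left p rfl
      · rw [if_neg h]
        have h2 : p * X i - ev2 p * X i = (p - ev2 p) * X i := by ring
        rw [h2]
        exact Dvd.dvd.mul_right hp _

lemma primeX (i : Fin 5) : Prime (X i : Rp) := by
  classical
  rw [← MulEquiv.prime_iff (renameEquiv ℂ (Equiv.swap i 0)).toMulEquiv]
  have h1 : (renameEquiv ℂ (Equiv.swap i 0)).toMulEquiv (X i) = (X 0 : Rp) := by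
    simp [Equiv.swap_apply_left]
  rw [h1, ← MulEquiv.prime_iff (finSuccEquiv ℂ 4).toMulEquiv]
  have h2 : (finSuccEquiv ℂ 4).toMulEquiv (X 0 : Rp) = Polynomial.X := by
    simp [finSuccEquiv_X_zero]
  rw [h2]
  exact Polynomial.prime_X

lemma koszul2 (a b : Rp) (h : a * X 0 + b * X 1 = 0) :
    ∃ t, a = X 1 * t ∧ b = -(X 0 * t) := by
  have hd : (X 0 : Rp) ∣ b * X 1 := ⟨-a, by linear_combination h⟩
  rcases (primeX 0).2.2 _ _ hd with h1 | h1
  · rcases h1 with ⟨s, rfl⟩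
    refine ⟨-s, ?_, by ring⟩
    have h3 : (a + X 1 * s) * X 0 = 0 := by linear_combination h
    rcases mul_eq_zero.mp h3 with h2 | h2
    · linear_combination h2
    · exact absurd h2 (X_ne_zero 0)
  · exact absurd h1 (by rw [MvPolynomial.X_dvd_X]; decide)

lemma koszul3 (a b c : Rp) (h : a * X 0 + b * X 1 + c * X 2 = 0) :
    ∃ t A B, a = X 1 * t + X 2 * A ∧ b = -(X 0 * t) + X 2 * B ∧
      c = -(X 0 * A) - X 1 * B := by
  have h0 : ev2 a * X 0 + ev2 b * X 1 = 0 := by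
    have := congrArg ev2 h
    simp only [_root_.map_add, _root_.map_mul, _root_.map_zero, ev2_X] at this
    norm_num at this
    convert this using 2 <;> norm_num <;> intro h <;> exact absurd h (by decide)
  obtain ⟨t, ht1, ht2⟩ := koszul2 _ _ h0
  obtain ⟨A, hA⟩ := X2_dvd_sub_ev2 a
  obtain ⟨B, hB⟩ := X2_dvd_sub_ev2 b
  have ha : a = X 1 * t + X 2 * A := by rw [← ht1]; linear_combination hA
  have hb : b = -(X 0 * t) + X 2 * B := by rw [← ht2]; linear_combination hB
  refine ⟨t, A, B, ha, hb, ?_⟩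
  have h3 : (c + X 0 * A + X 1 * B) * X 2 = 0 := by
    rw [ha, hb] at h; linear_combination h
  rcases mul_eq_zero.mp h3 with h2 | h2
  · linear_combination h2
  · exact absurd h2 (X_ne_zero 2)
lemma finsupp_deg_one {d : Fin 5 →₀ ℕ} (h : Finsupp.degree d = 1) :
    ∃ j, d = Finsupp.single j 1 := by
  classical
  have huniv : Finsupp.degree d = ∑ i : Fin 5, d i := by
    unfold Finsupp.degree
    exact Finset.sum_subset (Finset.subset_univ _)
      (fun x _ hx => Finsupp.notMem_support_iff.mp hx)
  rw [huniv, Fin.sum_univ_five] at h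
  have hcase : (d 0 = 1 ∧ d 1 = 0 ∧ d 2 = 0 ∧ d 3 = 0 ∧ d 4 = 0) ∨
      (d 0 = 0 ∧ d 1 = 1 ∧ d 2 = 0 ∧ d 3 = 0 ∧ d 4 = 0) ∨
      (d 0 = 0 ∧ d 1 = 0 ∧ d 2 = 1 ∧ d 3 = 0 ∧ d 4 = 0) ∨
      (d 0 = 0 ∧ d 1 = 0 ∧ d 2 = 0 ∧ d 3 = 1 ∧ d 4 = 0) ∨
      (d 0 = 0 ∧ d 1 = 0 ∧ d 2 = 0 ∧ d 3 = 0 ∧ d 4 = 1) := by omega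
  rcases hcase with ⟨h0,h1,h2,h3,h4⟩|⟨h0,h1,h2,h3,h4⟩|⟨h0,h1,h2,h3,h4⟩|⟨h0,h1,h2,h3,h4⟩|⟨h0,h1,h2,h3,h4⟩
  · exact ⟨0, by ext i; fin_cases i <;> simp [Finsupp.single_apply, h0,h1,h2,h3,h4]⟩
  · exact ⟨1, by ext i; fin_cases i <;> simp [Finsupp.single_apply, h0,h1,h2,h3,h4]⟩
  · exact ⟨2, by ext i; fin_cases i <;> simp [Finsupp.single_apply, h0,h1,h2,h3,h4]⟩
  · exact ⟨3, by ext i; fin_cases i <;> simp [Finsupp.single_apply, h0,h1,h2,h3,h4]⟩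
  · exact ⟨4, by ext i; fin_cases i <;> simp [Finsupp.single_apply, h0,h1,h2,h3,h4]⟩

lemma hom1 {p : Rp} (hp : p.IsHomogeneous 1) :
    p = ∑ j : Fin 5, C (coeff (Finsupp.single j 1) p) * X j := by
  classical
  apply MvPolynomial.ext
  intro d
  rw [coeff_sum]
  simp only [coeff_C_mul, MvPolynomial.coeff_X']
  by_cases hd : ∃ j, d = Finsupp.single j 1
  · obtain ⟨j, rfl⟩ := hd
    rw [Finset.sum_eq_single j]
    · simp
    · intro b _ hbj
      rw [if_neg, mul_zero]
      intro hb
      exact hbj ((Finsupp.single_left_inj one_ne_zero).mp hb)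
    · intro h; exact absurd (Finset.mem_univ j) h
  · have hc : coeff d p = 0 := by
      by_contra hc
      have := hp hc
      exact hd (finsupp_deg_one (by
        rw [Finsupp.degree_eq_weight_one]; exact this))
    rw [hc]
    symm
    apply Finset.sum_eq_zero
    intro j _
    rw [if_neg, mul_zero]
    intro hj
    exact hd ⟨j, hj.symm⟩

lemma comp_linear (Mt N : Matrix (Fin 5) (Fin 5) ℂ) (i : Fin 5) :
    aeval (fun r => ∑ j : Fin 5, C (N r j) * X j) (∑ j : Fin 5, C (Mt i j) * X j)
      = ∑ k : Fin 5, C ((Mt * N) i k) * X k := by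
  rw [map_sum]
  simp only [_root_.map_mul, aeval_C, aeval_X, algebraMap_eq]
  simp only [Finset.mul_sum, ← mul_assoc, ← C_mul]
  rw [Finset.sum_comm]
  apply Finset.sum_congr rfl
  intro k _
  rw [Matrix.mul_apply, map_sum, Finset.sum_mul]

lemma exists_algEquiv (l : Fin 5 → Rp) (hl : ∀ i, (l i).IsHomogeneous 1)
    (hind : LinearIndependent ℂ l)
    (hrep : ∀ i, l i = ∑ j : Fin 5, C (coeff (Finsupp.single j 1) (l i)) * X j) :
    ∃ e : Rp ≃ₐ[ℂ] Rp, ∀ i, e (X i) = l i := by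
  classical
  set A : Matrix (Fin 5) (Fin 5) ℂ := fun i j => coeff (Finsupp.single j 1) (l i) with hA
  have hrows : LinearIndependent ℂ (fun i => A i) := by
    rw [Fintype.linearIndependent_iff]
    intro g hg
    have h0 : ∑ i, g i • l i = 0 := by
      have := fun j => congrFun hg j
      simp only [Finset.sum_apply, Pi.smul_apply, Pi.zero_apply, smul_eq_mul] at this
      calc ∑ i, g i • l i = ∑ i, ∑ j : Fin 5, C (g i * A i j) * X j := by
            apply Finset.sum_congr rfl
            intro i _
            rw [hrep i]
            rw [Finset.smul_sum]
            apply Finset.sum_congr rfl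
            intro j _
            rw [smul_eq_C_mul, ← mul_assoc, ← C_mul]
        _ = ∑ j : Fin 5, C (∑ i, g i * A i j) * X j := by
            rw [Finset.sum_comm]
            apply Finset.sum_congr rfl
            intro j _
            rw [map_sum, Finset.sum_mul]
        _ = 0 := by
            apply Finset.sum_eq_zero
            intro j _
            rw [this j, map_zero, zero_mul]
    exact Fintype.linearIndependent_iff.mp hind g h0
  have hU : IsUnit A := Matrix.linearIndependent_rows_iff_isUnit.mp hrows
  have hdet : IsUnit A.det := (Matrix.isUnit_iff_isUnit_det A).mp hU
  set B := A⁻¹ with hB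
  have hAB : A * B = 1 := Matrix.mul_nonsing_inv A hdet
  have hBA : B * A = 1 := Matrix.nonsing_inv_mul A hdet
  set φ : Rp →ₐ[ℂ] Rp := aeval l with hφ
  set ψ : Rp →ₐ[ℂ] Rp := aeval (fun r => ∑ j : Fin 5, C (B r j) * X j) with hψ
  have hl' : l = fun r => ∑ j : Fin 5, C (A r j) * X j := funext hrep
  have key : ∀ (Mt N : Matrix (Fin 5) (Fin 5) ℂ), Mt * N = 1 →
      (aeval (fun r => ∑ j : Fin 5, C (N r j) * X j)).comp
        (aeval (fun r => ∑ j : Fin 5, C (Mt r j) * X j)) = AlgHom.id ℂ Rp := by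
    intro Mt N hMN
    apply MvPolynomial.algHom_ext
    intro i
    rw [AlgHom.comp_apply, aeval_X, comp_linear, hMN, AlgHom.id_apply]
    rw [Finset.sum_eq_single i]
    · simp [Matrix.one_apply]
    · intro b _ hbi
      rw [Matrix.one_apply_ne' hbi, map_zero, zero_mul]
    · intro h; exact absurd (Finset.mem_univ i) h
  have h1 : φ.comp ψ = AlgHom.id ℂ Rp := by
    rw [hφ, hψ, hl']
    exact key B A (by rw [hBA])
  have h2 : ψ.comp φ = AlgHom.id ℂ Rp := by
    rw [hφ, hψ, hl']
    exact key A B (by rw [hAB])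
  refine ⟨AlgEquiv.ofAlgHom φ ψ h1 h2, ?_⟩
  intro i
  simp [φ, aeval_X]


lemma part1 (l : Fin 5 → Rp) (hl : ∀ i, (l i).IsHomogeneous 1) (hind : LinearIndependent ℂ l)
    (M : Matrix (Fin 6) (Fin 6) Rp)
    (hM : M = !![0, 0, 0, 0, l 0, l 1;
                 0, 0, 0, -l 0, 0, l 2;
                 0, 0, 0, -l 1, -l 2, 0;
                 0, l 0, l 1, 0, l 3, l 4;
                 -l 0, 0, l 2, -l 3, 0, 0;
                 -l 1, -l 2, 0, -l 4, 0, 0])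
    (S : Matrix (Fin 6) (Fin 2) Rp)
    (hS : S = !![l 2, 0;
                 -l 1, -l 4;
                 l 0, l 3;
                 0, l 2;
                 0, -l 1;
                 0, l 0]) :
    LinearMap.ker (Matrix.mulVecLin Sᵀ) = LinearMap.range (Matrix.mulVecLin M) := by
  obtain ⟨e, he⟩ := exists_algEquiv l hl hind (fun i => hom1 (hl i))
  have hsymm : ∀ i, e.symm (l i) = X i := fun i => by rw [← he i, AlgEquiv.symm_apply_apply]
  have hM00 : M (0:Fin 6) (0:Fin 6) = 0 := by rw [hM]; rfl
  have hM01 : M (0:Fin 6) (1:Fin 6) = 0 := by rw [hM]; rfl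
  have hM02 : M (0:Fin 6) (2:Fin 6) = 0 := by rw [hM]; rfl
  have hM03 : M (0:Fin 6) (3:Fin 6) = 0 := by rw [hM]; rfl
  have hM04 : M (0:Fin 6) (4:Fin 6) = l 0 := by rw [hM]; rfl
  have hM05 : M (0:Fin 6) (5:Fin 6) = l 1 := by rw [hM]; rfl
  have hM10 : M (1:Fin 6) (0:Fin 6) = 0 := by rw [hM]; rfl
  have hM11 : M (1:Fin 6) (1:Fin 6) = 0 := by rw [hM]; rfl
  have hM12 : M (1:Fin 6) (2:Fin 6) = 0 := by rw [hM]; rfl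
  have hM13 : M (1:Fin 6) (3:Fin 6) = -l 0 := by rw [hM]; rfl
  have hM14 : M (1:Fin 6) (4:Fin 6) = 0 := by rw [hM]; rfl
  have hM15 : M (1:Fin 6) (5:Fin 6) = l 2 := by rw [hM]; rfl
  have hM20 : M (2:Fin 6) (0:Fin 6) = 0 := by rw [hM]; rfl
  have hM21 : M (2:Fin 6) (1:Fin 6) = 0 := by rw [hM]; rfl
  have hM22 : M (2:Fin 6) (2:Fin 6) = 0 := by rw [hM]; rfl
  have hM23 : M (2:Fin 6) (3:Fin 6) = -l 1 := by rw [hM]; rfl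
  have hM24 : M (2:Fin 6) (4:Fin 6) = -l 2 := by rw [hM]; rfl
  have hM25 : M (2:Fin 6) (5:Fin 6) = 0 := by rw [hM]; rfl
  have hM30 : M (3:Fin 6) (0:Fin 6) = 0 := by rw [hM]; rfl
  have hM31 : M (3:Fin 6) (1:Fin 6) = l 0 := by rw [hM]; rfl
  have hM32 : M (3:Fin 6) (2:Fin 6) = l 1 := by rw [hM]; rfl
  have hM33 : M (3:Fin 6) (3:Fin 6) = 0 := by rw [hM]; rfl
  have hM34 : M (3:Fin 6) (4:Fin 6) = l 3 := by rw [hM]; rfl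
  have hM35 : M (3:Fin 6) (5:Fin 6) = l 4 := by rw [hM]; rfl
  have hM40 : M (4:Fin 6) (0:Fin 6) = -l 0 := by rw [hM]; rfl
  have hM41 : M (4:Fin 6) (1:Fin 6) = 0 := by rw [hM]; rfl
  have hM42 : M (4:Fin 6) (2:Fin 6) = l 2 := by rw [hM]; rfl
  have hM43 : M (4:Fin 6) (3:Fin 6) = -l 3 := by rw [hM]; rfl
  have hM44 : M (4:Fin 6) (4:Fin 6) = 0 := by rw [hM]; rfl
  have hM45 : M (4:Fin 6) (5:Fin 6) = 0 := by rw [hM]; rfl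
  have hM50 : M (5:Fin 6) (0:Fin 6) = -l 1 := by rw [hM]; rfl
  have hM51 : M (5:Fin 6) (1:Fin 6) = -l 2 := by rw [hM]; rfl
  have hM52 : M (5:Fin 6) (2:Fin 6) = 0 := by rw [hM]; rfl
  have hM53 : M (5:Fin 6) (3:Fin 6) = -l 4 := by rw [hM]; rfl
  have hM54 : M (5:Fin 6) (4:Fin 6) = 0 := by rw [hM]; rfl
  have hM55 : M (5:Fin 6) (5:Fin 6) = 0 := by rw [hM]; rfl
  have hS00 : S (0:Fin 6) (0:Fin 2) = l 2 := by rw [hS]; rfl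
  have hS01 : S (0:Fin 6) (1:Fin 2) = 0 := by rw [hS]; rfl
  have hS10 : S (1:Fin 6) (0:Fin 2) = -l 1 := by rw [hS]; rfl
  have hS11 : S (1:Fin 6) (1:Fin 2) = -l 4 := by rw [hS]; rfl
  have hS20 : S (2:Fin 6) (0:Fin 2) = l 0 := by rw [hS]; rfl
  have hS21 : S (2:Fin 6) (1:Fin 2) = l 3 := by rw [hS]; rfl
  have hS30 : S (3:Fin 6) (0:Fin 2) = 0 := by rw [hS]; rfl
  have hS31 : S (3:Fin 6) (1:Fin 2) = l 2 := by rw [hS]; rfl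
  have hS40 : S (4:Fin 6) (0:Fin 2) = 0 := by rw [hS]; rfl
  have hS41 : S (4:Fin 6) (1:Fin 2) = -l 1 := by rw [hS]; rfl
  have hS50 : S (5:Fin 6) (0:Fin 2) = 0 := by rw [hS]; rfl
  have hS51 : S (5:Fin 6) (1:Fin 2) = l 0 := by rw [hS]; rfl

  have hStM : Sᵀ * M = 0 := by
    apply Matrix.ext; intro i j
    have hi : i = 0 ∨ i = 1 := by omega
    have hj : j = 0 ∨ j = 1 ∨ j = 2 ∨ j = 3 ∨ j = 4 ∨ j = 5 := by omega
    rcases hi with rfl|rfl <;> rcases hj with rfl|rfl|rfl|rfl|rfl|rfl <;>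
      · rw [Matrix.mul_apply, Fin.sum_univ_six]
        simp only [Matrix.transpose_apply, hM01, hM02, hM03, hM04, hM05, hM10, hM12, hM13, hM14,
          hM15, hM20, hM21, hM23, hM24, hM25, hM30, hM31, hM32, hM34, hM35, hM40, hM41, hM42,
          hM43, hM45, hM50, hM51, hM52, hM53, hM54, hM00, hM11, hM22, hM33, hM44, hM55,
          hS00, hS01, hS10, hS11, hS20, hS21, hS30, hS31, hS40, hS41, hS50, hS51,
          Matrix.zero_apply]
        ring1
  refine le_antisymm ?_ ?_
  · -- ker ⊆ range
    intro v hv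
    have hv' : Sᵀ.mulVec v = 0 := hv
    have h0 := congrFun hv' 0
    have h1 := congrFun hv' 1
    rw [Matrix.mulVec, dotProduct, Fin.sum_univ_six] at h0 h1
    simp only [Matrix.transpose_apply, hS00, hS01, hS10, hS11, hS20, hS21, hS30, hS31, hS40,
      hS41, hS50, hS51, Pi.zero_apply, zero_mul, add_zero, neg_mul] at h0 h1
    -- apply e.symm to h0
    have E1 : e.symm (v 2) * X 0 + (-(e.symm (v 1))) * X 1 + e.symm (v 0) * X 2 = 0 := by
      have h0' := congrArg e.symm h0
      simp only [map_add, _root_.map_mul, map_neg, map_zero, hsymm] at h0'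
      linear_combination h0'
    obtain ⟨t, A, B, ht, hA, hB⟩ := koszul3 _ _ _ E1
    have hv2 : v 2 = l 1 * e t + l 2 * e A := by
      have h' := congrArg e ht
      simp only [map_add, _root_.map_mul, he, AlgEquiv.apply_symm_apply] at h'
      linear_combination h'
    have hv1 : v 1 = l 0 * e t - l 2 * e B := by
      have h' := congrArg e hA
      simp only [map_add, _root_.map_mul, map_neg, he, AlgEquiv.apply_symm_apply] at h'
      linear_combination -h'
    have hv0 : v 0 = -(l 0 * e A) - l 1 * e B := by
      have h' := congrArg e hB
      simp only [map_sub, _root_.map_mul, map_neg, he, AlgEquiv.apply_symm_apply] at h'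
      linear_combination h'
    -- the reduced second equation
    have E2pre : l 2 * (v 3 + l 3 * e A + l 4 * e B) - l 1 * (v 4 - l 3 * e t)
        + l 0 * (v 5 - l 4 * e t) = 0 := by
      linear_combination h1 + l 4 * hv1 - l 3 * hv2
    have E2 : (e.symm (v 5) - X 4 * t) * X 0 + (-(e.symm (v 4) - X 3 * t)) * X 1
        + (e.symm (v 3) + X 3 * A + X 4 * B) * X 2 = 0 := by
      have h' := congrArg e.symm E2pre
      simp only [map_add, map_sub, _root_.map_mul, map_neg, map_zero, hsymm,
        AlgEquiv.symm_apply_apply] at h'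
      linear_combination h'
    obtain ⟨T, A2, B2, hT, hA2, hB2⟩ := koszul3 _ _ _ E2
    have hv5 : v 5 = l 4 * e t + l 1 * e T + l 2 * e A2 := by
      have h' := congrArg e hT
      simp only [map_add, map_sub, _root_.map_mul, he, AlgEquiv.apply_symm_apply] at h'
      linear_combination h'
    have hv4 : v 4 = l 3 * e t + l 0 * e T - l 2 * e B2 := by
      have h' := congrArg e hA2
      simp only [map_add, map_sub, _root_.map_mul, map_neg, he, AlgEquiv.apply_symm_apply] at h'
      linear_combination -h'
    have hv3 : v 3 = -(l 3 * e A) - l 4 * e B - l 0 * e A2 - l 1 * e B2 := by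
      have h' := congrArg e hB2
      simp only [map_add, map_sub, _root_.map_mul, map_neg, he, AlgEquiv.apply_symm_apply] at h'
      linear_combination h'
    refine ⟨![-(e T), -(e A2), -(e B2), -(e t), -(e A), -(e B)], ?_⟩
    set w : Fin 6 → Rp := ![-(e T), -(e A2), -(e B2), -(e t), -(e A), -(e B)] with hw
    have hw0 : w 0 = -(e T) := rfl
    have hw1 : w 1 = -(e A2) := rfl
    have hw2 : w 2 = -(e B2) := rfl
    have hw3 : w 3 = -(e t) := rfl
    have hw4 : w 4 = -(e A) := rfl
    have hw5 : w 5 = -(e B) := rfl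
    have hmv : M.mulVecLin w = M.mulVec w := rfl
    rw [hmv]
    funext i
    have hi : i = 0 ∨ i = 1 ∨ i = 2 ∨ i = 3 ∨ i = 4 ∨ i = 5 := by omega
    have hexp : ∀ j : Fin 6, (M.mulVec w) j = M j 0 * w 0 + M j 1 * w 1 + M j 2 * w 2
        + M j 3 * w 3 + M j 4 * w 4 + M j 5 * w 5 := by
      intro j
      rw [Matrix.mulVec, dotProduct, Fin.sum_univ_six]
    rcases hi with rfl|rfl|rfl|rfl|rfl|rfl <;>
        rw [hexp] <;>
        simp only [hM00, hM01, hM02, hM03, hM04, hM05, hM10, hM11, hM12, hM13, hM14, hM15,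
          hM20, hM21, hM22, hM23, hM24, hM25, hM30, hM31, hM32, hM33, hM34, hM35,
          hM40, hM41, hM42, hM43, hM44, hM45, hM50, hM51, hM52, hM53, hM54, hM55,
          hw0, hw1, hw2, hw3, hw4, hw5]
    · linear_combination -hv0
    · linear_combination -hv1
    · linear_combination -hv2
    · linear_combination -hv3
    · linear_combination -hv4
    · linear_combination -hv5
  · -- range ⊆ ker
    rintro x ⟨w, rfl⟩
    show Sᵀ.mulVec (M.mulVec w) = 0
    rw [Matrix.mulVec_mulVec, hStM, Matrix.zero_mulVec]

lemma subPf_eval_0_0 {A : Type*} [CommRing A] (N : Matrix (Fin 6) (Fin 6) A) : subPf N 0 0 = 0 := rfl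
lemma subPf_eval_0_1 {A : Type*} [CommRing A] (N : Matrix (Fin 6) (Fin 6) A) : subPf N 0 1 = N 2 3 * N 4 5 - N 2 4 * N 3 5 + N 2 5 * N 3 4 := rfl
lemma subPf_eval_0_2 {A : Type*} [CommRing A] (N : Matrix (Fin 6) (Fin 6) A) : subPf N 0 2 = N 1 3 * N 4 5 - N 1 4 * N 3 5 + N 1 5 * N 3 4 := rfl
lemma subPf_eval_0_3 {A : Type*} [CommRing A] (N : Matrix (Fin 6) (Fin 6) A) : subPf N 0 3 = N 1 2 * N 4 5 - N 1 4 * N 2 5 + N 1 5 * N 2 4 := rfl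
lemma subPf_eval_0_4 {A : Type*} [CommRing A] (N : Matrix (Fin 6) (Fin 6) A) : subPf N 0 4 = N 1 2 * N 3 5 - N 1 3 * N 2 5 + N 1 5 * N 2 3 := rfl
lemma subPf_eval_0_5 {A : Type*} [CommRing A] (N : Matrix (Fin 6) (Fin 6) A) : subPf N 0 5 = N 1 2 * N 3 4 - N 1 3 * N 2 4 + N 1 4 * N 2 3 := rfl
lemma subPf_eval_1_0 {A : Type*} [CommRing A] (N : Matrix (Fin 6) (Fin 6) A) : subPf N 1 0 = N 2 3 * N 4 5 - N 2 4 * N 3 5 + N 2 5 * N 3 4 := rfl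
lemma subPf_eval_1_1 {A : Type*} [CommRing A] (N : Matrix (Fin 6) (Fin 6) A) : subPf N 1 1 = 0 := rfl
lemma subPf_eval_1_2 {A : Type*} [CommRing A] (N : Matrix (Fin 6) (Fin 6) A) : subPf N 1 2 = N 0 3 * N 4 5 - N 0 4 * N 3 5 + N 0 5 * N 3 4 := rfl
lemma subPf_eval_1_3 {A : Type*} [CommRing A] (N : Matrix (Fin 6) (Fin 6) A) : subPf N 1 3 = N 0 2 * N 4 5 - N 0 4 * N 2 5 + N 0 5 * N 2 4 := rfl
lemma subPf_eval_1_4 {A : Type*} [CommRing A] (N : Matrix (Fin 6) (Fin 6) A) : subPf N 1 4 = N 0 2 * N 3 5 - N 0 3 * N 2 5 + N 0 5 * N 2 3 := rfl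
lemma subPf_eval_1_5 {A : Type*} [CommRing A] (N : Matrix (Fin 6) (Fin 6) A) : subPf N 1 5 = N 0 2 * N 3 4 - N 0 3 * N 2 4 + N 0 4 * N 2 3 := rfl
lemma subPf_eval_2_0 {A : Type*} [CommRing A] (N : Matrix (Fin 6) (Fin 6) A) : subPf N 2 0 = N 1 3 * N 4 5 - N 1 4 * N 3 5 + N 1 5 * N 3 4 := rfl
lemma subPf_eval_2_1 {A : Type*} [CommRing A] (N : Matrix (Fin 6) (Fin 6) A) : subPf N 2 1 = N 0 3 * N 4 5 - N 0 4 * N 3 5 + N 0 5 * N 3 4 := rfl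
lemma subPf_eval_2_2 {A : Type*} [CommRing A] (N : Matrix (Fin 6) (Fin 6) A) : subPf N 2 2 = 0 := rfl
lemma subPf_eval_2_3 {A : Type*} [CommRing A] (N : Matrix (Fin 6) (Fin 6) A) : subPf N 2 3 = N 0 1 * N 4 5 - N 0 4 * N 1 5 + N 0 5 * N 1 4 := rfl
lemma subPf_eval_2_4 {A : Type*} [CommRing A] (N : Matrix (Fin 6) (Fin 6) A) : subPf N 2 4 = N 0 1 * N 3 5 - N 0 3 * N 1 5 + N 0 5 * N 1 3 := rfl
lemma subPf_eval_2_5 {A : Type*} [CommRing A] (N : Matrix (Fin 6) (Fin 6) A) : subPf N 2 5 = N 0 1 * N 3 4 - N 0 3 * N 1 4 + N 0 4 * N 1 3 := rfl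
lemma subPf_eval_3_0 {A : Type*} [CommRing A] (N : Matrix (Fin 6) (Fin 6) A) : subPf N 3 0 = N 1 2 * N 4 5 - N 1 4 * N 2 5 + N 1 5 * N 2 4 := rfl
lemma subPf_eval_3_1 {A : Type*} [CommRing A] (N : Matrix (Fin 6) (Fin 6) A) : subPf N 3 1 = N 0 2 * N 4 5 - N 0 4 * N 2 5 + N 0 5 * N 2 4 := rfl
lemma subPf_eval_3_2 {A : Type*} [CommRing A] (N : Matrix (Fin 6) (Fin 6) A) : subPf N 3 2 = N 0 1 * N 4 5 - N 0 4 * N 1 5 + N 0 5 * N 1 4 := rfl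
lemma subPf_eval_3_3 {A : Type*} [CommRing A] (N : Matrix (Fin 6) (Fin 6) A) : subPf N 3 3 = 0 := rfl
lemma subPf_eval_3_4 {A : Type*} [CommRing A] (N : Matrix (Fin 6) (Fin 6) A) : subPf N 3 4 = N 0 1 * N 2 5 - N 0 2 * N 1 5 + N 0 5 * N 1 2 := rfl
lemma subPf_eval_3_5 {A : Type*} [CommRing A] (N : Matrix (Fin 6) (Fin 6) A) : subPf N 3 5 = N 0 1 * N 2 4 - N 0 2 * N 1 4 + N 0 4 * N 1 2 := rfl
lemma subPf_eval_4_0 {A : Type*} [CommRing A] (N : Matrix (Fin 6) (Fin 6) A) : subPf N 4 0 = N 1 2 * N 3 5 - N 1 3 * N 2 5 + N 1 5 * N 2 3 := rfl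
lemma subPf_eval_4_1 {A : Type*} [CommRing A] (N : Matrix (Fin 6) (Fin 6) A) : subPf N 4 1 = N 0 2 * N 3 5 - N 0 3 * N 2 5 + N 0 5 * N 2 3 := rfl
lemma subPf_eval_4_2 {A : Type*} [CommRing A] (N : Matrix (Fin 6) (Fin 6) A) : subPf N 4 2 = N 0 1 * N 3 5 - N 0 3 * N 1 5 + N 0 5 * N 1 3 := rfl
lemma subPf_eval_4_3 {A : Type*} [CommRing A] (N : Matrix (Fin 6) (Fin 6) A) : subPf N 4 3 = N 0 1 * N 2 5 - N 0 2 * N 1 5 + N 0 5 * N 1 2 := rfl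
lemma subPf_eval_4_4 {A : Type*} [CommRing A] (N : Matrix (Fin 6) (Fin 6) A) : subPf N 4 4 = 0 := rfl
lemma subPf_eval_4_5 {A : Type*} [CommRing A] (N : Matrix (Fin 6) (Fin 6) A) : subPf N 4 5 = N 0 1 * N 2 3 - N 0 2 * N 1 3 + N 0 3 * N 1 2 := rfl
lemma subPf_eval_5_0 {A : Type*} [CommRing A] (N : Matrix (Fin 6) (Fin 6) A) : subPf N 5 0 = N 1 2 * N 3 4 - N 1 3 * N 2 4 + N 1 4 * N 2 3 := rfl
lemma subPf_eval_5_1 {A : Type*} [CommRing A] (N : Matrix (Fin 6) (Fin 6) A) : subPf N 5 1 = N 0 2 * N 3 4 - N 0 3 * N 2 4 + N 0 4 * N 2 3 := rfl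
lemma subPf_eval_5_2 {A : Type*} [CommRing A] (N : Matrix (Fin 6) (Fin 6) A) : subPf N 5 2 = N 0 1 * N 3 4 - N 0 3 * N 1 4 + N 0 4 * N 1 3 := rfl
lemma subPf_eval_5_3 {A : Type*} [CommRing A] (N : Matrix (Fin 6) (Fin 6) A) : subPf N 5 3 = N 0 1 * N 2 4 - N 0 2 * N 1 4 + N 0 4 * N 1 2 := rfl
lemma subPf_eval_5_4 {A : Type*} [CommRing A] (N : Matrix (Fin 6) (Fin 6) A) : subPf N 5 4 = N 0 1 * N 2 3 - N 0 2 * N 1 3 + N 0 3 * N 1 2 := rfl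
lemma subPf_eval_5_5 {A : Type*} [CommRing A] (N : Matrix (Fin 6) (Fin 6) A) : subPf N 5 5 = 0 := rfl

lemma mem_span_eps (s : Set Rp) (q x : Rp) (h : q ∈ s)
    (hx : x = q ∨ x = -q ∨ x = 0) : x ∈ Ideal.span s := by
  rcases hx with rfl | rfl | rfl
  · exact Ideal.subset_span h
  · exact neg_mem (Ideal.subset_span h)
  · exact zero_mem _

lemma part2 (l : Fin 5 → Rp)
    (M : Matrix (Fin 6) (Fin 6) Rp)
    (hM : M = !![0, 0, 0, 0, l 0, l 1;
                 0, 0, 0, -l 0, 0, l 2;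
                 0, 0, 0, -l 1, -l 2, 0;
                 0, l 0, l 1, 0, l 3, l 4;
                 -l 0, 0, l 2, -l 3, 0, 0;
                 -l 1, -l 2, 0, -l 4, 0, 0])
    (S : Matrix (Fin 6) (Fin 2) Rp)
    (hS : S = !![l 2, 0;
                 -l 1, -l 4;
                 l 0, l 3;
                 0, l 2;
                 0, -l 1;
                 0, l 0]) :
    Ideal.span {x | ∃ i j : Fin 6, i < j ∧ x = S i 0 * S j 1 - S i 1 * S j 0}
      = pfIdeal4 M := by
  have hM00 : M (0:Fin 6) (0:Fin 6) = 0 := by rw [hM]; rfl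
  have hM01 : M (0:Fin 6) (1:Fin 6) = 0 := by rw [hM]; rfl
  have hM02 : M (0:Fin 6) (2:Fin 6) = 0 := by rw [hM]; rfl
  have hM03 : M (0:Fin 6) (3:Fin 6) = 0 := by rw [hM]; rfl
  have hM04 : M (0:Fin 6) (4:Fin 6) = l 0 := by rw [hM]; rfl
  have hM05 : M (0:Fin 6) (5:Fin 6) = l 1 := by rw [hM]; rfl
  have hM10 : M (1:Fin 6) (0:Fin 6) = 0 := by rw [hM]; rfl
  have hM11 : M (1:Fin 6) (1:Fin 6) = 0 := by rw [hM]; rfl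
  have hM12 : M (1:Fin 6) (2:Fin 6) = 0 := by rw [hM]; rfl
  have hM13 : M (1:Fin 6) (3:Fin 6) = -l 0 := by rw [hM]; rfl
  have hM14 : M (1:Fin 6) (4:Fin 6) = 0 := by rw [hM]; rfl
  have hM15 : M (1:Fin 6) (5:Fin 6) = l 2 := by rw [hM]; rfl
  have hM20 : M (2:Fin 6) (0:Fin 6) = 0 := by rw [hM]; rfl
  have hM21 : M (2:Fin 6) (1:Fin 6) = 0 := by rw [hM]; rfl
  have hM22 : M (2:Fin 6) (2:Fin 6) = 0 := by rw [hM]; rfl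
  have hM23 : M (2:Fin 6) (3:Fin 6) = -l 1 := by rw [hM]; rfl
  have hM24 : M (2:Fin 6) (4:Fin 6) = -l 2 := by rw [hM]; rfl
  have hM25 : M (2:Fin 6) (5:Fin 6) = 0 := by rw [hM]; rfl
  have hM30 : M (3:Fin 6) (0:Fin 6) = 0 := by rw [hM]; rfl
  have hM31 : M (3:Fin 6) (1:Fin 6) = l 0 := by rw [hM]; rfl
  have hM32 : M (3:Fin 6) (2:Fin 6) = l 1 := by rw [hM]; rfl
  have hM33 : M (3:Fin 6) (3:Fin 6) = 0 := by rw [hM]; rfl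
  have hM34 : M (3:Fin 6) (4:Fin 6) = l 3 := by rw [hM]; rfl
  have hM35 : M (3:Fin 6) (5:Fin 6) = l 4 := by rw [hM]; rfl
  have hM40 : M (4:Fin 6) (0:Fin 6) = -l 0 := by rw [hM]; rfl
  have hM41 : M (4:Fin 6) (1:Fin 6) = 0 := by rw [hM]; rfl
  have hM42 : M (4:Fin 6) (2:Fin 6) = l 2 := by rw [hM]; rfl
  have hM43 : M (4:Fin 6) (3:Fin 6) = -l 3 := by rw [hM]; rfl
  have hM44 : M (4:Fin 6) (4:Fin 6) = 0 := by rw [hM]; rfl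
  have hM45 : M (4:Fin 6) (5:Fin 6) = 0 := by rw [hM]; rfl
  have hM50 : M (5:Fin 6) (0:Fin 6) = -l 1 := by rw [hM]; rfl
  have hM51 : M (5:Fin 6) (1:Fin 6) = -l 2 := by rw [hM]; rfl
  have hM52 : M (5:Fin 6) (2:Fin 6) = 0 := by rw [hM]; rfl
  have hM53 : M (5:Fin 6) (3:Fin 6) = -l 4 := by rw [hM]; rfl
  have hM54 : M (5:Fin 6) (4:Fin 6) = 0 := by rw [hM]; rfl
  have hM55 : M (5:Fin 6) (5:Fin 6) = 0 := by rw [hM]; rfl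
  have hS00 : S (0:Fin 6) (0:Fin 2) = l 2 := by rw [hS]; rfl
  have hS01 : S (0:Fin 6) (1:Fin 2) = 0 := by rw [hS]; rfl
  have hS10 : S (1:Fin 6) (0:Fin 2) = -l 1 := by rw [hS]; rfl
  have hS11 : S (1:Fin 6) (1:Fin 2) = -l 4 := by rw [hS]; rfl
  have hS20 : S (2:Fin 6) (0:Fin 2) = l 0 := by rw [hS]; rfl
  have hS21 : S (2:Fin 6) (1:Fin 2) = l 3 := by rw [hS]; rfl
  have hS30 : S (3:Fin 6) (0:Fin 2) = 0 := by rw [hS]; rfl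
  have hS31 : S (3:Fin 6) (1:Fin 2) = l 2 := by rw [hS]; rfl
  have hS40 : S (4:Fin 6) (0:Fin 2) = 0 := by rw [hS]; rfl
  have hS41 : S (4:Fin 6) (1:Fin 2) = -l 1 := by rw [hS]; rfl
  have hS50 : S (5:Fin 6) (0:Fin 2) = 0 := by rw [hS]; rfl
  have hS51 : S (5:Fin 6) (1:Fin 2) = l 0 := by rw [hS]; rfl
  unfold pfIdeal4
  apply le_antisymm
  · rw [Ideal.span_le]
    rintro x ⟨i, j, hij, rfl⟩
    have hi : i = 0 ∨ i = 1 ∨ i = 2 ∨ i = 3 ∨ i = 4 ∨ i = 5 := by omega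
    have hj : j = 0 ∨ j = 1 ∨ j = 2 ∨ j = 3 ∨ j = 4 ∨ j = 5 := by omega
    rcases hi with rfl|rfl|rfl|rfl|rfl|rfl <;> rcases hj with rfl|rfl|rfl|rfl|rfl|rfl <;>
      first
        | exact absurd hij (by decide)
        | (refine mem_span_eps _ _ _ (⟨_, _, hij, rfl⟩ :
              _ ∈ {x : Rp | ∃ α β : Fin 6, α < β ∧ x = subPf M α β}) ?_
           simp only [hS00, hS01, hS10, hS11, hS20, hS21, hS30, hS31, hS40, hS41, hS50, hS51,
             subPf_eval_0_1, subPf_eval_0_2, subPf_eval_0_3, subPf_eval_0_4, subPf_eval_0_5,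
             subPf_eval_1_2, subPf_eval_1_3, subPf_eval_1_4, subPf_eval_1_5,
             subPf_eval_2_3, subPf_eval_2_4, subPf_eval_2_5,
             subPf_eval_3_4, subPf_eval_3_5, subPf_eval_4_5,
             hM01, hM02, hM03, hM04, hM05, hM10, hM12, hM13, hM14, hM15,
             hM20, hM21, hM23, hM24, hM25, hM30, hM31, hM32, hM34, hM35,
             hM40, hM41, hM42, hM43, hM45, hM50, hM51, hM52, hM53, hM54]
           first
             | (left; ring1)
             | (right; left; ring1)
             | (right; right; ring1))
  · rw [Ideal.span_le]
    rintro x ⟨i, j, hij, rfl⟩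
    have hi : i = 0 ∨ i = 1 ∨ i = 2 ∨ i = 3 ∨ i = 4 ∨ i = 5 := by omega
    have hj : j = 0 ∨ j = 1 ∨ j = 2 ∨ j = 3 ∨ j = 4 ∨ j = 5 := by omega
    rcases hi with rfl|rfl|rfl|rfl|rfl|rfl <;> rcases hj with rfl|rfl|rfl|rfl|rfl|rfl <;>
      first
        | exact absurd hij (by decide)
        | (refine mem_span_eps _ _ _ (⟨_, _, hij, rfl⟩ :
              _ ∈ {x : Rp | ∃ α β : Fin 6, α < β ∧ x = S α 0 * S β 1 - S α 1 * S β 0}) ?_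
           simp only [hS00, hS01, hS10, hS11, hS20, hS21, hS30, hS31, hS40, hS41, hS50, hS51,
             subPf_eval_0_1, subPf_eval_0_2, subPf_eval_0_3, subPf_eval_0_4, subPf_eval_0_5,
             subPf_eval_1_2, subPf_eval_1_3, subPf_eval_1_4, subPf_eval_1_5,
             subPf_eval_2_3, subPf_eval_2_4, subPf_eval_2_5,
             subPf_eval_3_4, subPf_eval_3_5, subPf_eval_4_5,
             hM01, hM02, hM03, hM04, hM05, hM10, hM12, hM13, hM14, hM15,
             hM20, hM21, hM23, hM24, hM25, hM30, hM31, hM32, hM34, hM35,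
             hM40, hM41, hM42, hM43, hM45, hM50, hM51, hM52, hM53, hM54]
           first
             | (left; ring1)
             | (right; left; ring1)
             | (right; right; ring1))

/-- Proposition 1.2, case (d). -/
theorem type_d_syzygy_and_minors
    (l : Fin 5 → Rp) (hl : ∀ i, (l i).IsHomogeneous 1) (hind : LinearIndependent ℂ l)
    (M : Matrix (Fin 6) (Fin 6) Rp)
    (hM : M = !![0, 0, 0, 0, l 0, l 1;
                 0, 0, 0, -l 0, 0, l 2;
                 0, 0, 0, -l 1, -l 2, 0;
                 0, l 0, l 1, 0, l 3, l 4;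
                 -l 0, 0, l 2, -l 3, 0, 0;
                 -l 1, -l 2, 0, -l 4, 0, 0])
    (S : Matrix (Fin 6) (Fin 2) Rp)
    (hS : S = !![l 2, 0;
                 -l 1, -l 4;
                 l 0, l 3;
                 0, l 2;
                 0, -l 1;
                 0, l 0]) :
    LinearMap.ker (Matrix.mulVecLin Sᵀ) = LinearMap.range (Matrix.mulVecLin M) ∧
    Ideal.span {x | ∃ i j : Fin 6, i < j ∧ x = S i 0 * S j 1 - S i 1 * S j 0}
      = pfIdeal4 M := by
  exact ⟨part1 l hl hind M hM S hS, part2 l M hM S hS⟩
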